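/- Let p be an n-gram language model over a finite alphabet Σ, i.e., p(ȳ_t | y_{<t}) = p(ȳ_t | y_{t−n+1}⋯y_{t−1}) depends only on the previous n−1 symbols (with prefixes padded appropriately). Suppose p is representation-compatible: with m = n−1 and Γ = Σ, there exist E ∈ ℝ^{(|Σ|+1)×mG} and u ∈ ℝ^{|Σ|+1} such that for every context, p(ȳ | γ) = softmax(E χ(γ) + u)_ȳ, where γ is the configuration recording the last n−1 symbols and χ is the stack-vector encoding. Then p is 1-efficiently representable: there exists a weakly equivalent Heaviside-activated Elman RNN language model of hidden dimension D ≤ (n−1)·⌈log₂(|Σ|+1)⌉. -/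
import Mathlib


namespace Paper

/-- `m`-bounded stack configurations: strings over `Γ` of length at most `m`,
read bottom-to-top (the last entry of the list is the top of the stack). -/
abbrev Conf (Γ : Type*) (m : ℕ) : Type _ := {l : List Γ // l.length ≤ m}

instance instFiniteConf {Γ : Type*} [Finite Γ] {m : ℕ} : Finite (Conf Γ m) :=
  (List.finite_length_le Γ m).to_subtype

/-- An `m`-bounded pushdown automaton (BPDA): a weighted transition function on
`m`-bounded stack configurations taking values in `[0,1]`, together with
initial and final weight functions. -/
structure BPDA (S Γ : Type*) (m : ℕ) where
  μ : Conf Γ m → S → Conf Γ m → ℝ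
  init : Conf Γ m → ℝ
  final : Conf Γ m → ℝ
  μ_mem : ∀ γ y γ', μ γ y γ' ∈ Set.Icc (0 : ℝ) 1
  init_mem : ∀ γ, init γ ∈ Set.Icc (0 : ℝ) 1
  final_mem : ∀ γ, final γ ∈ Set.Icc (0 : ℝ) 1

namespace BPDA

variable {S Γ : Type*} {m : ℕ}

/-- A BPDA is probabilistic if the initial weights sum to one and, from every
configuration, the outgoing transition weights plus the final weight sum to one. -/
def Probabilistic (P : BPDA S Γ m) : Prop :=
  (∑ᶠ γ : Conf Γ m, P.init γ) = 1 ∧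
  ∀ γ : Conf Γ m, (∑ᶠ y : S, ∑ᶠ γ' : Conf Γ m, P.μ γ y γ') + P.final γ = 1

/-- A BPDA is deterministic if exactly one configuration has positive initial weight and
every `(γ, y)` has at most one successor configuration of positive weight. -/
def Deterministic (P : BPDA S Γ m) : Prop :=
  (∃! γ : Conf Γ m, 0 < P.init γ) ∧
  ∀ γ y γ₁ γ₂, 0 < P.μ γ y γ₁ → 0 < P.μ γ y γ₂ → γ₁ = γ₂

/-- Forward weight: the total weight of reading `ys` starting from configuration `γ`
and multiplying in the final weight of the configuration reached. -/
noncomputable def fwd (P : BPDA S Γ m) : Conf Γ m → List S → ℝ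
  | γ, [] => P.final γ
  | γ, y :: ys => ∑ᶠ γ' : Conf Γ m, P.μ γ y γ' * fwd P γ' ys

/-- The probability a BPDA assigns to a string: the sum over all runs of the initial
weight times the product of transition weights times the final weight. -/
noncomputable def prob (P : BPDA S Γ m) (ys : List S) : ℝ :=
  ∑ᶠ γ : Conf Γ m, P.init γ * P.fwd γ ys

/-- Next-symbol conditional weights of a (deterministic) BPDA: `p(y ∣ γ) = τ(γ, y)`
and `p(EOS ∣ γ) = ρ(γ)` (EOS is encoded by `none`). -/
noncomputable def pcond (P : BPDA S Γ m) (γ : Conf Γ m) : Option S → ℝ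
  | some y => ∑ᶠ γ' : Conf Γ m, P.μ γ y γ'
  | none => P.final γ

/-- A run of a BPDA on `ys`: a sequence of configurations with positive initial weight
and positive transition weights throughout. -/
def IsRun (P : BPDA S Γ m) (ys : List S) (g : Fin (ys.length + 1) → Conf Γ m) : Prop :=
  0 < P.init (g 0) ∧
  ∀ t : Fin ys.length, 0 < P.μ (g t.castSucc) (ys.get t) (g t.succ)

end BPDA

/-- A probabilistic finite-state automaton. -/
structure PFSA (S Q : Type*) where
  δ : Q → S → Q → ℝ
  init : Q → ℝ
  final : Q → ℝ
  δ_nonneg : ∀ q y q', 0 ≤ δ q y q'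
  init_nonneg : ∀ q, 0 ≤ init q
  final_nonneg : ∀ q, 0 ≤ final q
  init_sum : (∑ᶠ q : Q, init q) = 1
  out_sum : ∀ q : Q, (∑ᶠ y : S, ∑ᶠ q' : Q, δ q y q') + final q = 1

namespace PFSA

variable {S Q : Type*}

noncomputable def fwd (A : PFSA S Q) : Q → List S → ℝ
  | q, [] => A.final q
  | q, y :: ys => ∑ᶠ q' : Q, A.δ q y q' * fwd A q' ys

/-- The probability a PFSA assigns to a string: the sum of the weights of all paths
yielding that string. -/
noncomputable def prob (A : PFSA S Q) (ys : List S) : ℝ :=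
  ∑ᶠ q : Q, A.init q * A.fwd q ys

end PFSA

/-! ### Stack-vector encodings -/

/-- The number of bits per stack symbol, `G = ⌈log₂ (|Γ| + 1)⌉`. -/
def nBits (Γ : Type*) [Fintype Γ] : ℕ := Nat.clog 2 (Fintype.card Γ + 1)

/-- The `j`-th entry, reading from the top of the stack downwards, of a configuration
padded at the bottom with the placeholder symbol ι (encoded by `none`) to length `m`. -/
def entry {Γ : Type*} {m : ℕ} (γ : Conf Γ m) (j : Fin m) : Option Γ :=
  (γ.val.reverse.map some).getD j none

/-- A valid symbol code `c : Γ ∪ {ι} → {0, …, |Γ|}` with `c(ι) = 0`: an injective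
function into `{0, …, |Γ|}` sending the placeholder to `0`. -/
def GoodEnc {Γ : Type*} [Fintype Γ] (enc : Option Γ → ℕ) : Prop :=
  Function.Injective enc ∧ enc none = 0 ∧ ∀ g, enc g ≤ Fintype.card Γ

/-- The `G`-bit binary code `Bin` of a single (possibly placeholder) stack symbol. -/
noncomputable def binVec {Γ : Type*} [Fintype Γ] (enc : Option Γ → ℕ) (x : Option Γ) :
    Fin (nBits Γ) → ℝ :=
  fun g => if (enc x).testBit g then 1 else 0

/-- The stack-vector encoding `χ` of a configuration: the concatenation of the binary
codes of its `m` padded entries, top of the stack first. -/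
noncomputable def stackVec {Γ : Type*} [Fintype Γ] (enc : Option Γ → ℕ) {m : ℕ}
    (γ : Conf Γ m) : Fin m × Fin (nBits Γ) → ℝ :=
  fun p => binVec enc (entry γ p.1) p.2

/-- A function on configurations is stack-affine if it is implemented by an affine map
on stack vectors. -/
def StackAffine {Γ : Type*} [Fintype Γ] (enc : Option Γ → ℕ) {m : ℕ}
    (f : Conf Γ m → Conf Γ m) : Prop :=
  ∃ (M : Matrix (Fin m × Fin (nBits Γ)) (Fin m × Fin (nBits Γ)) ℝ)
    (v : Fin m × Fin (nBits Γ) → ℝ),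
    ∀ γ, stackVec enc (f γ) = M.mulVec (stackVec enc γ) + v

/-- `ζ` is `K`-varied (with stack-affine components): there is a partition of the
alphabet into `K` blocks (given by `κ`) and `K` symbol-independent, stack-affine
functions `f k` with `ζ γ y = f (κ y) γ`. -/
def KVariedAffine {S Γ : Type*} [Fintype Γ] {m : ℕ} (enc : Option Γ → ℕ) (K : ℕ)
    (ζ : Conf Γ m → S → Conf Γ m) : Prop :=
  ∃ (κ : S → Fin K) (f : Fin K → Conf Γ m → Conf Γ m),
    (∀ γ y, ζ γ y = f (κ y) γ) ∧ ∀ k, StackAffine enc (f k)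

/-- `α` is Σ-determined: there are `s : Σ → Γ` and, for each input symbol, a partition
of the `m` stack slots into three blocks (given by `J y : Fin m → Fin 3`) such that
slot `j` of `α(γ, y)` keeps `γ_j`, is replaced by `s y`, or is emptied to ι, according
to the block of `j`. -/
def SigmaDetermined {S Γ : Type*} {m : ℕ} (α : Conf Γ m → S → Conf Γ m) : Prop :=
  ∃ (s : S → Γ) (J : S → Fin m → Fin 3),
    ∀ γ y j, entry (α γ y) j =
      if J y j = 0 then entry γ j else if J y j = 1 then some (s y) else none

/-! ### Heaviside-activated Elman RNN language models -/

/-- The Heaviside step function. -/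
noncomputable def heaviside (x : ℝ) : ℝ := if 0 < x then 1 else 0

/-- The softmax probability of coordinate `i` under logits `z`. -/
noncomputable def softmaxAt {I : Type*} [Fintype I] (z : I → ℝ) (i : I) : ℝ :=
  Real.exp (z i) / ∑ i' : I, Real.exp (z i')

/-- A Heaviside-activated Elman RNN language model of hidden dimension `D`:
initial hidden state `η`, recurrence/input matrices `U`, `V`, bias `b`, symbol
representation `emb`, output matrix `E` and output bias `u` (rows indexed by
`Σ ∪ {EOS}`, with EOS encoded by `none`). -/
structure RNNLM (S : Type*) (D : ℕ) where
  R : ℕ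
  η : Fin D → ℝ
  U : Matrix (Fin D) (Fin D) ℝ
  V : Matrix (Fin D) (Fin R) ℝ
  b : Fin D → ℝ
  emb : S → Fin R → ℝ
  E : Option S → Fin D → ℝ
  u : Option S → ℝ

namespace RNNLM

variable {S : Type*} {D : ℕ}

/-- One step of the Elman recurrence: `h ↦ H(U h + V r(y) + b)`, componentwise. -/
noncomputable def step (M : RNNLM S D) (h : Fin D → ℝ) (y : S) : Fin D → ℝ :=
  fun i => heaviside (M.U.mulVec h i + M.V.mulVec (M.emb y) i + M.b i)

/-- The hidden state after reading a string left-to-right. -/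
noncomputable def hidden (M : RNNLM S D) (ys : List S) : Fin D → ℝ :=
  ys.foldl M.step M.η

/-- Next-symbol conditional probabilities: `p(a ∣ ys) = softmax(E h(ys) + u)_a`. -/
noncomputable def cond [Fintype S] (M : RNNLM S D) (ys : List S) (a : Option S) : ℝ :=
  softmaxAt (fun a' => (∑ j, M.E a' j * M.hidden ys j) + M.u a') a

end RNNLM

/-- The probability of the string `pre ++ rest` given that `pre` has been consumed,
under the autoregressive factorization with conditionals `c`:
`p(y) = p(EOS ∣ y) ∏ₜ p(yₜ ∣ y_{<t})`. -/
noncomputable def condProb {S : Type*} (c : List S → Option S → ℝ) :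
    List S → List S → ℝ
  | pre, [] => c pre none
  | pre, y :: ys => c pre (some y) * condProb c (pre ++ [y]) ys

/-- The probability an RNN LM assigns to a string. -/
noncomputable def RNNLM.prob {S : Type*} [Fintype S] {D : ℕ} (M : RNNLM S D)
    (ys : List S) : ℝ :=
  condProb M.cond [] ys

/-- A deterministic BPDA is representation-compatible if its next-symbol conditional
probabilities are a softmax of an affine function of the stack vector. -/
def BPDA.RepCompatible {S Γ : Type*} [Fintype S] [Fintype Γ] {m : ℕ}
    (P : BPDA S Γ m) (enc : Option Γ → ℕ) : Prop :=
  ∃ (E : Option S → Fin m × Fin (nBits Γ) → ℝ) (u : Option S → ℝ),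
    ∀ (γ : Conf Γ m) (a : Option S),
      P.pcond γ a = softmaxAt (fun a' => (∑ j, E a' j * stackVec enc γ j) + u a') a

end Paper

namespace Paper

/-- The configuration recording the last `n - 1` symbols of a string (most recent on
top of the stack); shorter prefixes give shorter configurations, which the
stack-vector encoding pads with the placeholder ι. -/
def ctx {S : Type*} (n : ℕ) (ys : List S) : Conf S (n - 1) :=
  ⟨(ys.reverse.take (n - 1)).reverse, by
    simp only [List.length_reverse, List.length_take]
    omega⟩

end Paper


namespace Paper

lemma heaviside_bit (c : Prop) [Decidable c] :
    heaviside (if c then (1:ℝ) else 0) = if c then (1:ℝ) else 0 := by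
  by_cases h : c <;> simp [heaviside, h]

lemma heaviside_binVec {Γ : Type*} [Fintype Γ] (enc : Option Γ → ℕ) (x : Option Γ)
    (g : Fin (nBits Γ)) : heaviside (binVec enc x g) = binVec enc x g := by
  unfold binVec; exact heaviside_bit _

lemma entry_ctx {S : Type} (n : ℕ) (ys : List S) (j : Fin (n - 1)) :
    entry (ctx n ys) j = ys.reverse[(j : ℕ)]? := by
  unfold entry ctx
  simp only [List.reverse_reverse, List.getD_eq_getElem?_getD, List.getElem?_map,
    List.getElem?_take, j.isLt, if_true]
  cases ys.reverse[(j : ℕ)]? <;> rfl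

end Paper

open Paper in
/-- A representation-compatible n-gram language model (its
next-symbol conditionals depend only on the last `n - 1` symbols and are a softmax of
an affine function of the stack-vector encoding of that context, with `m = n - 1` and
`Γ = Σ`) is 1-efficiently representable: some weakly equivalent Heaviside-activated
Elman RNN LM has hidden dimension `D ≤ (n-1) · ⌈log₂(|Σ|+1)⌉`. -/
theorem ngram_one_efficiently_representable {S : Type} [Fintype S]
    (n : ℕ) (hn : 1 ≤ n)
    (p : List S → Option S → ℝ)
    (hnonneg : ∀ (ys : List S) (a : Option S), 0 ≤ p ys a)
    (hsum : ∀ ys : List S, (∑ a : Option S, p ys a) = 1)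
    (hngram : ∀ ys ys' : List S,
      ys.reverse.take (n - 1) = ys'.reverse.take (n - 1) → p ys = p ys')
    (enc : Option S → ℕ) (henc : GoodEnc enc)
    (hrc : ∃ (E : Option S → Fin (n - 1) × Fin (nBits S) → ℝ) (u : Option S → ℝ),
      ∀ (ys : List S) (a : Option S),
        p ys a = softmaxAt (fun a' => (∑ j, E a' j * stackVec enc (ctx n ys) j) + u a') a) :
    ∃ D : ℕ, D ≤ (n - 1) * Nat.clog 2 (Fintype.card S + 1) ∧
      ∃ M : RNNLM S D, ∀ ys : List S, M.prob ys = condProb p [] ys := by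
  classical
  obtain ⟨E, u, hE⟩ := hrc
  refine ⟨(n - 1) * nBits S, le_rfl, ?_⟩
  let m := n - 1
  let G := nBits S
  let e : Fin m × Fin G ≃ Fin (m * G) := finProdFinEquiv
  let prev : Fin m × Fin G → Option (Fin m × Fin G) := fun q =>
    if h : 0 < (q.1 : ℕ) then some (⟨(q.1 : ℕ) - 1, by omega⟩, q.2) else none
  let M : RNNLM S (m * G) :=
    { R := G
      η := fun _ => 0
      U := fun i i' => if some (e.symm i') = prev (e.symm i) then 1 else 0
      V := fun i g => if ((e.symm i).1 : ℕ) = 0 ∧ (e.symm i).2 = g then 1 else 0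
      b := fun _ => 0
      emb := fun y => binVec enc (some y)
      E := fun a i => E a (e.symm i)
      u := u }
  have hhid : ∀ ys : List S, M.hidden ys = fun i => stackVec enc (ctx n ys) (e.symm i) := by
    intro ys
    induction ys using List.reverseRecOn with
    | nil =>
        funext i
        have h0 : entry (ctx n ([] : List S)) (e.symm i).1 = none := by
          rw [entry_ctx]; rfl
        simp [RNNLM.hidden, M, stackVec, h0, binVec, henc.2.1]
    | append_singleton ys y ih =>
        funext i
        have hstep : M.hidden (ys ++ [y]) = M.step (M.hidden ys) y := by
          simp [RNNLM.hidden, List.foldl_append]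
        rw [hstep, ih]
        show heaviside (M.U.mulVec _ i + M.V.mulVec (M.emb y) i + M.b i) = _
        have hb : M.b i = 0 := rfl
        have hUsum : M.U.mulVec (fun i' => stackVec enc (ctx n ys) (e.symm i')) i =
            ∑ q' : Fin m × Fin G,
              (if some q' = prev (e.symm i) then 1 else 0) * stackVec enc (ctx n ys) q' := by
          simp only [Matrix.mulVec, dotProduct]
          rw [← Equiv.sum_comp e
            (fun i' => M.U i i' * stackVec enc (ctx n ys) (e.symm i'))]
          refine Finset.sum_congr rfl fun q' _ => ?_
          simp [M]
        have hVsum : M.V.mulVec (M.emb y) i =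
            if ((e.symm i).1 : ℕ) = 0 then binVec enc (some y) (e.symm i).2 else 0 := by
          rw [Matrix.mulVec]
          show (∑ g : Fin G,
            (if ((e.symm i).1 : ℕ) = 0 ∧ (e.symm i).2 = g then (1:ℝ) else 0)
              * binVec enc (some y) g) = _
          by_cases h0 : ((e.symm i).1 : ℕ) = 0
          · simp [h0, ite_mul]
          · simp [h0]
        rw [hUsum, hVsum, hb, add_zero]
        set q := e.symm i with hq
        show heaviside _ = binVec enc (entry (ctx n (ys ++ [y])) q.1) q.2
        have hent : entry (ctx n (ys ++ [y])) q.1 = (y :: ys.reverse)[(q.1 : ℕ)]? := by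
          rw [entry_ctx]; simp
        by_cases h0 : (q.1 : ℕ) = 0
        · have hprev : prev q = none := by simp [prev, h0]
          have : (∑ q' : Fin m × Fin G,
              (if some q' = prev q then (1:ℝ) else 0) * stackVec enc (ctx n ys) q') = 0 := by
            simp [hprev]
          rw [this, zero_add, if_pos h0, hent, h0, List.getElem?_cons_zero]
          exact heaviside_binVec enc _ _
        · have hlt : 0 < (q.1 : ℕ) := Nat.pos_of_ne_zero h0
          have hq1 : ((q.1 : ℕ) - 1) < m := by have := q.1.isLt; omega
          set q0 : Fin m × Fin G := (⟨(q.1 : ℕ) - 1, hq1⟩, q.2) with hq0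
          have hprev : prev q = some q0 := by simp [prev, hlt, hq0]
          have : (∑ q' : Fin m × Fin G,
              (if some q' = prev q then (1:ℝ) else 0) * stackVec enc (ctx n ys) q')
              = stackVec enc (ctx n ys) q0 := by
            rw [hprev]
            simp [ite_mul]
          rw [this, if_neg h0, add_zero, hent]
          have hk : (y :: ys.reverse)[(q.1 : ℕ)]? = ys.reverse[((q.1 : ℕ) - 1)]? := by
            rcases Nat.exists_eq_succ_of_ne_zero h0 with ⟨k, hk⟩
            simp [hk]
          rw [hk]
          show heaviside (stackVec enc (ctx n ys) q0) = _
          have : stackVec enc (ctx n ys) q0 = binVec enc (ys.reverse[((q.1 : ℕ) - 1)]?) q.2 := by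
            show binVec enc (entry (ctx n ys) q0.1) q0.2 = _
            rw [entry_ctx]
          rw [this]
          exact heaviside_binVec enc _ _
  have hcond : ∀ ys a, M.cond ys a = p ys a := by
    intro ys a
    rw [hE]
    unfold RNNLM.cond
    congr 1
    funext a'
    rw [hhid]
    congr 1
    exact Fintype.sum_equiv e.symm _ _ (fun j => rfl)
  refine ⟨M, fun ys => ?_⟩
  have : M.cond = p := by funext ys a; exact hcond ys a
  unfold RNNLM.prob
  rw [this]
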